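/- arXiv:1801.05127 — 4 statements merged into one kernel-verified Lean document; each statement's English description precedes it below -/
import Mathlib

section
/- Let V be a finite type, r : V, and f : V → V with f r = r and such that for every v : V there exists n : ℕ with f^[n] v = r (a rooted tree with parent map f). Fix v : V and k : ℕ, and let L be the number of indices j < k such that f^[j] v ≠ r and the parent edge of f^[j] v is light (i.e., 2·|desc(f^[j] v)| ≤ |desc(f^[j+1] v)|). Then |desc(f^[k] v)| ≥ 2^L · |desc(v)|, i.e., the descendant-set size at least doubles across every light edge on the path from v toward the root. -/
lemma desc_subset_step {V : Type*} [Fintype V] (f : V → V) (u : V) :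
    ({x : V | ∃ n : ℕ, f^[n] x = u}).ncard ≤
      ({x : V | ∃ n : ℕ, f^[n] x = f u}).ncard := by
  apply Set.ncard_le_ncard _ (Set.toFinite _)
  rintro x ⟨n, hn⟩
  exact ⟨n + 1, by rw [Function.iterate_succ_apply', hn]⟩

/-- In a rooted tree on a finite type `V` given by root `r` and parent map `f`,
walking `k` steps from `v` toward the root, if `L` is the number of indices
`j < k` at which a light edge is crossed (i.e. `f^[j] v ≠ r` and
`2·|desc (f^[j] v)| ≤ |desc (f^[j+1] v)|`), then
`|desc (f^[k] v)| ≥ 2^L · |desc v|`. -/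
theorem desc_card_doubles_across_light_edges
    {V : Type*} [Fintype V] [DecidableEq V] (r : V) (f : V → V)
    (hr : f r = r) (hroot : ∀ v : V, ∃ n : ℕ, f^[n] v = r)
    (v : V) (k : ℕ) :
    2 ^ (((Finset.range k).filter (fun j =>
            f^[j] v ≠ r ∧
            2 * ({x : V | ∃ n : ℕ, f^[n] x = f^[j] v}).ncard ≤
              ({x : V | ∃ n : ℕ, f^[n] x = f^[j+1] v}).ncard)).card)
        * ({x : V | ∃ n : ℕ, f^[n] x = v}).ncard
      ≤ ({x : V | ∃ n : ℕ, f^[n] x = f^[k] v}).ncard := by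
  induction k with
  | zero => rw [Finset.range_zero, Finset.filter_empty, Finset.card_empty]; simp
  | succ k ih =>
    have hstep := desc_subset_step f (f^[k] v)
    rw [← Function.iterate_succ_apply' f k v] at hstep
    rw [Finset.range_add_one, Finset.filter_insert]
    by_cases hc : f^[k] v ≠ r ∧
        2 * ({x : V | ∃ n : ℕ, f^[n] x = f^[k] v}).ncard ≤
          ({x : V | ∃ n : ℕ, f^[n] x = f^[k+1] v}).ncard
    · rw [if_pos hc, Finset.card_insert_of_notMem (fun h => lt_irrefl k (Finset.mem_range.mp (Finset.mem_of_mem_filter k h)))]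
      calc 2 ^ (_ + 1) * ({x : V | ∃ n : ℕ, f^[n] x = v}).ncard
          = 2 * (2 ^ _ * ({x : V | ∃ n : ℕ, f^[n] x = v}).ncard) := by ring
        _ ≤ 2 * ({x : V | ∃ n : ℕ, f^[n] x = f^[k] v}).ncard := by
            exact Nat.mul_le_mul_left 2 ih
        _ ≤ _ := hc.2
    · rw [if_neg hc]
      exact le_trans ih hstep
end

section
/- Let V be a finite type, r : V, and f : V → V with f r = r and such that for every v : V there exists n : ℕ with f^[n] v = r (a rooted tree with parent map f). Then for every vertex v : V, the number of indices j : ℕ such that f^[j] v ≠ r and the parent edge of f^[j] v is light (i.e., 2·|desc(f^[j] v)| ≤ |desc(f^[j+1] v)|) is at most ⌊log₂ |V|⌋ (Nat.log 2 (Fintype.card V)). In particular, each leaf-to-root path of an n-vertex rooted tree crosses at most ⌊log₂ n⌋ light edges, and hence intersects at most ⌊log₂ n⌋ + 1 different paths of the tree's heavy path decomposition. -/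
/-- In a rooted tree on a finite type `V` given by root `r` and parent map `f`,
for every vertex `v` the number of indices `j` such that `f^[j] v ≠ r` and the
parent edge of `f^[j] v` is light (`2·|desc (f^[j] v)| ≤ |desc (f^[j+1] v)|`)
is at most `⌊log₂ |V|⌋`: each leaf-to-root path crosses at most `⌊log₂ n⌋`
light edges. -/
theorem light_edges_on_root_path_le_log
    {V : Type*} [Fintype V] (r : V) (f : V → V)
    (hr : f r = r) (hroot : ∀ v : V, ∃ n : ℕ, f^[n] v = r) (v : V) :
    ({j : ℕ | f^[j] v ≠ r ∧
        2 * ({x : V | ∃ n : ℕ, f^[n] x = f^[j] v}).ncard ≤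
          ({x : V | ∃ n : ℕ, f^[n] x = f^[j+1] v}).ncard}).ncard
      ≤ Nat.log 2 (Fintype.card V) := by
  classical
  set D : ℕ → ℕ := fun m => ({x : V | ∃ n : ℕ, f^[n] x = f^[m] v}).ncard with hD
  set S : Set ℕ := {j : ℕ | f^[j] v ≠ r ∧ 2 * D j ≤ D (j+1)} with hSdef
  obtain ⟨n, hn⟩ := hroot v
  have hfr : ∀ m : ℕ, f^[m] r = r := fun m => Function.iterate_fixed hr m
  have hSsub : S ⊆ Set.Iio n := by
    intro j hj
    by_contra h
    simp only [Set.mem_Iio, not_lt] at h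
    apply hj.1
    have : f^[j] v = f^[j - n] (f^[n] v) := by
      rw [← Function.iterate_add_apply]
      congr 1
      omega
    rw [this, hn, hfr]
  have hSfin : S.Finite := (Set.finite_Iio n).subset hSsub
  set T : Finset ℕ := hSfin.toFinset with hT
  have hTsub : T ⊆ Finset.range n := by
    intro j hj
    rw [hT, Set.Finite.mem_toFinset] at hj
    exact Finset.mem_range.mpr (hSsub hj)
  -- basic facts about D
  have hDpos : ∀ m, 1 ≤ D m := by
    intro m
    have : f^[m] v ∈ {x : V | ∃ n : ℕ, f^[n] x = f^[m] v} := ⟨0, rfl⟩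
    have h := Set.ncard_pos (Set.toFinite _) (s := {x : V | ∃ n : ℕ, f^[n] x = f^[m] v})
    exact h.mpr ⟨_, this⟩
  have hDmono : ∀ m, D m ≤ D (m+1) := by
    intro m
    apply Set.ncard_le_ncard _ (Set.toFinite _)
    rintro x ⟨k, hk⟩
    exact ⟨k + 1, by simp [Function.iterate_succ_apply', hk]⟩
  have hDle : ∀ m, D m ≤ Fintype.card V := by
    intro m
    calc D m ≤ (Set.univ : Set V).ncard := Set.ncard_le_ncard (Set.subset_univ _) (Set.toFinite _)
    _ = Fintype.card V := by rw [Set.ncard_univ, Nat.card_eq_fintype_card]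
  -- main induction
  have key : ∀ m, 2 ^ (T ∩ Finset.range m).card ≤ D m := by
    intro m
    induction m with
    | zero => simpa using hDpos 0
    | succ m ih =>
      by_cases hm : m ∈ T
      · have : T ∩ Finset.range (m+1) = insert m (T ∩ Finset.range m) := by
          ext j
          simp only [Finset.mem_inter, Finset.mem_range, Finset.mem_insert]
          constructor
          · rintro ⟨hj, hj2⟩
            rcases Nat.lt_succ_iff_lt_or_eq.mp hj2 with h | h
            · exact Or.inr ⟨hj, h⟩
            · exact Or.inl h
          · rintro (h | ⟨h1, h2⟩)
            · subst h; exact ⟨hm, Nat.lt_succ_self _⟩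
            · exact ⟨h1, h2.trans (Nat.lt_succ_self m)⟩
        rw [this, Finset.card_insert_of_notMem (by simp)]
        have hlight : 2 * D m ≤ D (m+1) := by
          rw [hT, Set.Finite.mem_toFinset] at hm
          exact hm.2
        calc 2 ^ ((T ∩ Finset.range m).card + 1)
            = 2 * 2 ^ (T ∩ Finset.range m).card := by rw [pow_succ, Nat.mul_comm]
          _ ≤ 2 * D m := Nat.mul_le_mul_left 2 ih
          _ ≤ D (m+1) := hlight
      · have : T ∩ Finset.range (m+1) = T ∩ Finset.range m := by
          ext j
          simp only [Finset.mem_inter, Finset.mem_range]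
          constructor
          · rintro ⟨hj, hj2⟩
            refine ⟨hj, ?_⟩
            rcases Nat.lt_succ_iff_lt_or_eq.mp hj2 with h | h
            · exact h
            · exact absurd (h ▸ hj) hm
          · rintro ⟨h1, h2⟩
            exact ⟨h1, h2.trans (Nat.lt_succ_self m)⟩
        rw [this]
        exact ih.trans (hDmono m)
  have h2 : 2 ^ T.card ≤ Fintype.card V := by
    have h := key n
    rw [Finset.inter_eq_left.mpr hTsub] at h
    exact h.trans (hDle n)
  have hcard : S.ncard = T.card := Set.ncard_eq_toFinset_card S hSfin
  have hV : Fintype.card V ≠ 0 := by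
    have := Fintype.card_pos_iff.mpr ⟨r⟩
    omega
  calc S.ncard = T.card := hcard
    _ ≤ Nat.log 2 (Fintype.card V) := (Nat.le_log_iff_pow_le one_lt_two hV).mpr h2
end

section
/- Let G be a simple graph on a finite vertex type V such that every vertex has degree at least 1 and at most 2 (so G is a disjoint union of paths with at least one edge and cycles). Then G has a matching M such that the set of vertices covered by M has size at least two thirds of |V|: 3 · |{v : v is matched by M}| ≥ 2 · |V|. -/
private lemma matching_aux {V : Type*} [Fintype V] [DecidableEq V]
    (G : SimpleGraph V) [DecidableRel G.Adj] :
    ∀ n (s : Finset V), s.card = n →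
      (∀ v ∈ s, 1 ≤ (G.neighborFinset v ∩ s).card ∧ (G.neighborFinset v ∩ s).card ≤ 2) →
      ∃ M : G.Subgraph, M.IsMatching ∧ M.verts ⊆ (s : Set V) ∧
        2 * s.card ≤ 3 * M.verts.ncard := by
  intro n
  induction n using Nat.strong_induction_on with
  | _ n IH =>
    intro s hcard hdeg
    rcases s.eq_empty_or_nonempty with rfl | hne
    · exact ⟨⊥, fun v hv => absurd hv (by simp), by simp, by simp⟩
    obtain ⟨u, hus, humin⟩ := s.exists_min_image (fun v => (G.neighborFinset v ∩ s).card) hne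
    obtain ⟨hu1, hu2⟩ := hdeg u hus
    obtain ⟨v, hv⟩ := Finset.card_pos.mp hu1
    rw [Finset.mem_inter, SimpleGraph.mem_neighborFinset] at hv
    obtain ⟨huv, hvs⟩ := hv
    have hne_uv : u ≠ v := G.ne_of_adj huv
    set s₂ : Finset V := s \ {u, v} with hs₂
    set T : Finset V := s₂.filter (fun w => G.neighborFinset w ∩ s₂ = ∅) with hT
    set s' : Finset V := s₂ \ T with hs'
    have hTs₂ : T ⊆ s₂ := Finset.filter_subset _ _
    have hs₂s : s₂ ⊆ s := Finset.sdiff_subset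
    have hs's₂ : s' ⊆ s₂ := Finset.sdiff_subset
    have hmem_s₂ : ∀ x, x ∈ s₂ ↔ x ∈ s ∧ x ≠ u ∧ x ≠ v := by
      intro x
      rw [hs₂, Finset.mem_sdiff, Finset.mem_insert, Finset.mem_singleton]
      tauto
    have hTnb : ∀ w ∈ T, w ∈ s ∧ w ≠ u ∧ w ≠ v ∧
        ∀ x ∈ G.neighborFinset w ∩ s, x = u ∨ x = v := by
      intro w hw
      rw [hT, Finset.mem_filter] at hw
      obtain ⟨hw₂, hwiso⟩ := hw
      rw [hmem_s₂] at hw₂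
      refine ⟨hw₂.1, hw₂.2.1, hw₂.2.2, ?_⟩
      intro x hx
      by_contra hcon
      push_neg at hcon
      have : x ∈ G.neighborFinset w ∩ s₂ := by
        rw [Finset.mem_inter] at hx ⊢
        exact ⟨hx.1, (hmem_s₂ x).mpr ⟨hx.2, hcon.1, hcon.2⟩⟩
      rw [hwiso] at this
      exact absurd this (Finset.notMem_empty x)
    have hTcard : T.card ≤ 1 := by
      have key : ∃ z, z ∈ s ∧ ∃ p, p ∈ G.neighborFinset z ∩ s ∧ p ∉ T ∧
          T ⊆ G.neighborFinset z ∩ s := by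
        rcases Nat.lt_or_ge (G.neighborFinset u ∩ s).card 2 with hlt | hge
        · have heq : ({v} : Finset V) = G.neighborFinset u ∩ s := by
            refine Finset.eq_of_subset_of_card_le ?_ (by rw [Finset.card_singleton]; omega)
            intro x hx
            rw [Finset.mem_singleton] at hx
            subst hx
            rw [Finset.mem_inter, SimpleGraph.mem_neighborFinset]
            exact ⟨huv, hvs⟩
          refine ⟨v, hvs, u, ?_, ?_, ?_⟩
          · rw [Finset.mem_inter, SimpleGraph.mem_neighborFinset]
            exact ⟨huv.symm, hus⟩
          · exact fun hc => (hTnb u hc).2.1 rfl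
          · intro w hw
            obtain ⟨hws, hwu, hwv, hnb⟩ := hTnb w hw
            obtain ⟨hw1, _⟩ := hdeg w hws
            obtain ⟨x, hx⟩ := Finset.card_pos.mp hw1
            rcases hnb x hx with rfl | rfl
            · exfalso
              have : w ∈ G.neighborFinset x ∩ s := by
                rw [Finset.mem_inter, SimpleGraph.mem_neighborFinset] at hx ⊢
                exact ⟨hx.1.symm, hws⟩
              rw [← heq, Finset.mem_singleton] at this
              exact hwv this
            · rw [Finset.mem_inter, SimpleGraph.mem_neighborFinset] at hx ⊢
              exact ⟨hx.1.symm, hws⟩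
        · refine ⟨u, hus, v, ?_, ?_, ?_⟩
          · rw [Finset.mem_inter, SimpleGraph.mem_neighborFinset]
            exact ⟨huv, hvs⟩
          · exact fun hc => (hTnb v hc).2.2.1 rfl
          · intro w hw
            obtain ⟨hws, hwu, hwv, hnb⟩ := hTnb w hw
            have hwge : 2 ≤ (G.neighborFinset w ∩ s).card :=
              le_trans hge (humin w hws)
            have hsub : G.neighborFinset w ∩ s ⊆ {u, v} := by
              intro x hx
              rw [Finset.mem_insert, Finset.mem_singleton]
              exact hnb x hx
            have heq : ({u, v} : Finset V) = G.neighborFinset w ∩ s := by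
              refine (Finset.eq_of_subset_of_card_le hsub ?_).symm
              calc ({u, v} : Finset V).card
                  ≤ ({v} : Finset V).card + 1 := Finset.card_insert_le u {v}
                _ ≤ 2 := by simp
                _ ≤ _ := hwge
            have hu_mem : u ∈ G.neighborFinset w ∩ s := by
              rw [← heq]; simp
            rw [Finset.mem_inter, SimpleGraph.mem_neighborFinset] at hu_mem ⊢
            exact ⟨hu_mem.1.symm, hws⟩
      obtain ⟨z, hzs, p, hpmem, hpT, hTsub⟩ := key
      rw [Finset.card_le_one]
      intro a ha b hb
      by_contra hab
      have hap : a ≠ p := fun h => hpT (h ▸ ha)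
      have hbp : b ≠ p := fun h => hpT (h ▸ hb)
      have hsub3 : ({p, a, b} : Finset V) ⊆ G.neighborFinset z ∩ s := by
        intro x hx
        rw [Finset.mem_insert, Finset.mem_insert, Finset.mem_singleton] at hx
        rcases hx with rfl | rfl | rfl
        · exact hpmem
        · exact hTsub ha
        · exact hTsub hb
      have h3 : ({p, a, b} : Finset V).card = 3 := by
        rw [Finset.card_insert_of_notMem (by simp [hap.symm, hbp.symm]),
          Finset.card_insert_of_notMem (by simp [hab]), Finset.card_singleton]
      have hle := Finset.card_le_card hsub3
      rw [h3] at hle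
      have := (hdeg z hzs).2
      omega
    -- the reduced set s' satisfies the degree hypothesis
    have hdeg' : ∀ w ∈ s', 1 ≤ (G.neighborFinset w ∩ s').card ∧
        (G.neighborFinset w ∩ s').card ≤ 2 := by
      intro w hw
      have hws₂ : w ∈ s₂ := hs's₂ hw
      have hws : w ∈ s := hs₂s hws₂
      constructor
      · rw [hs', Finset.mem_sdiff] at hw
        have hwT : w ∉ T := hw.2
        rw [hT, Finset.mem_filter] at hwT
        have hne' : G.neighborFinset w ∩ s₂ ≠ ∅ := fun h => hwT ⟨hws₂, h⟩
        obtain ⟨x, hx⟩ := Finset.nonempty_iff_ne_empty.mpr hne'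
        rw [Finset.mem_inter] at hx
        have hxs' : x ∈ s' := by
          rw [hs', Finset.mem_sdiff]
          refine ⟨hx.2, ?_⟩
          rw [hT, Finset.mem_filter]
          rintro ⟨-, hxiso⟩
          have : w ∈ G.neighborFinset x ∩ s₂ := by
            rw [Finset.mem_inter, SimpleGraph.mem_neighborFinset]
            rw [SimpleGraph.mem_neighborFinset] at hx
            exact ⟨hx.1.symm, hws₂⟩
          rw [hxiso] at this
          exact absurd this (Finset.notMem_empty w)
        refine Finset.card_pos.mpr ⟨x, ?_⟩
        rw [Finset.mem_inter]
        exact ⟨hx.1, hxs'⟩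
      · exact le_trans (Finset.card_le_card
          (Finset.inter_subset_inter le_rfl (hs's₂.trans hs₂s))) (hdeg w hws).2
    -- cardinalities
    have huv_sub : ({u, v} : Finset V) ⊆ s := by
      intro x hx
      rw [Finset.mem_insert, Finset.mem_singleton] at hx
      rcases hx with rfl | rfl
      · exact hus
      · exact hvs
    have hcard₂ : s₂.card = s.card - 2 := by
      rw [hs₂, Finset.card_sdiff_of_subset huv_sub, Finset.card_insert_of_notMem (by simp [hne_uv]),
        Finset.card_singleton]
    have hcard' : s'.card = s₂.card - T.card := by
      rw [hs', Finset.card_sdiff_of_subset hTs₂]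
    have hTle : T.card ≤ s₂.card := Finset.card_le_card hTs₂
    have h2le : 2 ≤ s.card := by
      have := Finset.card_le_card huv_sub
      rwa [Finset.card_insert_of_notMem (by simp [hne_uv]), Finset.card_singleton] at this
    have hlt : s'.card < n := by omega
    obtain ⟨M', hM'match, hM'sub, hM'card⟩ := IH s'.card hlt s' rfl hdeg'
    have hMs₂ : ∀ x ∈ M'.verts, x ∈ s₂ := fun x hx => hs's₂ (Finset.mem_coe.mp (hM'sub hx))
    -- combine with the edge u-v
    refine ⟨G.subgraphOfAdj huv ⊔ M', ?_, ?_, ?_⟩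
    · refine (SimpleGraph.Subgraph.IsMatching.subgraphOfAdj huv).sup hM'match ?_
      rw [(SimpleGraph.Subgraph.IsMatching.subgraphOfAdj huv).support_eq_verts,
        hM'match.support_eq_verts, SimpleGraph.subgraphOfAdj_verts]
      rw [Set.disjoint_left]
      intro x hx1 hx2
      rw [Set.mem_insert_iff, Set.mem_singleton_iff] at hx1
      rcases hx1 with rfl | rfl
      · exact ((hmem_s₂ x).mp (hMs₂ x hx2)).2.1 rfl
      · exact ((hmem_s₂ x).mp (hMs₂ x hx2)).2.2 rfl
    · rw [SimpleGraph.Subgraph.verts_sup, SimpleGraph.subgraphOfAdj_verts]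
      intro x hx
      rw [Set.mem_union, Set.mem_insert_iff, Set.mem_singleton_iff] at hx
      rcases hx with (rfl | rfl) | hx
      · exact hus
      · exact hvs
      · exact hs₂s (hMs₂ x hx)
    · have hdisj : Disjoint ({u, v} : Set V) M'.verts := by
        rw [Set.disjoint_left]
        intro x hx1 hx2
        rw [Set.mem_insert_iff, Set.mem_singleton_iff] at hx1
        rcases hx1 with rfl | rfl
        · exact ((hmem_s₂ x).mp (hMs₂ x hx2)).2.1 rfl
        · exact ((hmem_s₂ x).mp (hMs₂ x hx2)).2.2 rfl
      have hncard : ((G.subgraphOfAdj huv ⊔ M').verts).ncard = 2 + M'.verts.ncard := by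
        rw [SimpleGraph.Subgraph.verts_sup, SimpleGraph.subgraphOfAdj_verts,
          Set.ncard_union_eq hdisj (Set.toFinite _) (Set.toFinite _)]
        congr 1
        rw [Set.ncard_pair hne_uv]
      rw [hncard]
      omega

/-- If every vertex of a simple graph `G` on a finite vertex type `V` has degree
at least 1 and at most 2 (so `G` is a disjoint union of paths with at least one
edge and cycles), then `G` has a matching covering at least two thirds of the
vertices. -/
theorem matching_covers_two_thirds_of_paths_and_cycles
    {V : Type*} [Fintype V] (G : SimpleGraph V) [DecidableRel G.Adj]
    (hdeg : ∀ v : V, 1 ≤ G.degree v ∧ G.degree v ≤ 2) :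
    ∃ M : G.Subgraph, M.IsMatching ∧
      2 * Fintype.card V ≤ 3 * M.verts.ncard := by
  classical
  obtain ⟨M, hM, -, hcard⟩ := matching_aux G (Finset.univ.card) Finset.univ rfl
    (by
      intro v _
      rw [Finset.inter_univ]
      exact hdeg v)
  exact ⟨M, hM, by rwa [Finset.card_univ] at hcard⟩
end

section
/- Let P and E be finite types, b c : ℕ with 1 ≤ b and 1 ≤ c, and let R Q : P → E → Prop be (decidable) relations. Assume: (i) for every p : P, |{e : E | R p e}| ≤ b; (ii) for every e : E, |{p : P | Q p e}| ≤ c. Define U = {e : E | |{p : P | R p e}| ≥ c} and Bad = {p : P | |{e ∈ U | Q p e}| > 2·b}. Then |U| · c ≤ |P| · b, and 2 · |Bad| ≤ |P|. -/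
/-- Double-counting argument of the deterministic shortcut construction: if
each part `p` issues at most `b` extra requests (`R p e`), each edge carries at
most `c` parts in the good shortcut (`Q p e`), an edge is broken when it
receives at least `c` extra requests, and a part is bad when more than `2b` of
the edges routing it in the good shortcut are broken, then
`|U|·c ≤ |P|·b` and at most half of the parts are bad. -/
theorem broken_edges_and_bad_parts_bound
    {P E : Type*} [Fintype P] [Fintype E]
    (b c : ℕ) (hb : 1 ≤ b) (hc : 1 ≤ c)
    (R Q : P → E → Prop)
    [∀ p e, Decidable (R p e)] [∀ p e, Decidable (Q p e)]
    (hR : ∀ p : P, (Finset.univ.filter (fun e => R p e)).card ≤ b)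
    (hQ : ∀ e : E, (Finset.univ.filter (fun p => Q p e)).card ≤ c) :
    let U : Finset E :=
      Finset.univ.filter (fun e => c ≤ (Finset.univ.filter (fun p => R p e)).card)
    let Bad : Finset P :=
      Finset.univ.filter (fun p => 2 * b < (U.filter (fun e => Q p e)).card)
    U.card * c ≤ Fintype.card P * b ∧ 2 * Bad.card ≤ Fintype.card P := by
  intro U Bad
  -- First: U.card * c ≤ |P| * b
  have h1 : U.card * c ≤ Fintype.card P * b := by
    calc U.card * c = ∑ _e ∈ U, c := by rw [Finset.sum_const, smul_eq_mul]
    _ ≤ ∑ e ∈ U, (Finset.univ.filter (fun p => R p e)).card := by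
        apply Finset.sum_le_sum
        intro e he
        exact (Finset.mem_filter.mp he).2
    _ ≤ ∑ e : E, (Finset.univ.filter (fun p => R p e)).card :=
        Finset.sum_le_sum_of_subset (Finset.filter_subset _ _)
    _ = ∑ p : P, (Finset.univ.filter (fun e => R p e)).card := by
        simp_rw [Finset.card_filter]; exact Finset.sum_comm
    _ ≤ ∑ _p : P, b := Finset.sum_le_sum (fun p _ => hR p)
    _ = Fintype.card P * b := by simp [Finset.card_univ, mul_comm]
  refine ⟨h1, ?_⟩
  -- Second: 2 * Bad.card ≤ |P|
  have h2 : Bad.card * (2 * b) ≤ ∑ p ∈ Bad, (U.filter (fun e => Q p e)).card := by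
    rw [← smul_eq_mul]
    exact Finset.card_nsmul_le_sum _ _ _ (fun p hp => le_of_lt (Finset.mem_filter.mp hp).2)
  have h3 : ∑ p ∈ Bad, (U.filter (fun e => Q p e)).card ≤ U.card * c := by
    calc ∑ p ∈ Bad, (U.filter (fun e => Q p e)).card
        ≤ ∑ p : P, (U.filter (fun e => Q p e)).card :=
        Finset.sum_le_sum_of_subset (Finset.filter_subset _ _)
    _ = ∑ e ∈ U, (Finset.univ.filter (fun p => Q p e)).card := by
        simp_rw [Finset.card_filter]; exact Finset.sum_comm
    _ ≤ ∑ _e ∈ U, c := Finset.sum_le_sum (fun e _ => hQ e)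
    _ = U.card * c := by rw [Finset.sum_const, smul_eq_mul]
  have h4 : Bad.card * (2 * b) ≤ Fintype.card P * b := le_trans h2 (le_trans h3 h1)
  have : 2 * Bad.card * b ≤ Fintype.card P * b := by linarith [h4]
  exact Nat.le_of_mul_le_mul_right this hb
end
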